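/- For any n×n matrix A and X ∈ ℚ^{C(n,2)}: X·A^{∨2}·uᵀ = ½·tr(X̂·A(J−I)Aᵀ), where u is the all-ones vector of length C(n,2), J the n×n all-ones matrix, and I the n×n identity. -/

import Mathlib

open Matrix BigOperators Filter

/-- Index set of pairs `(i,j)` with `i < j`. -/
abbrev Pairs (n : ℕ) := {p : Fin n × Fin n // p.1 < p.2}

/-- Zeon second power: matrix of 2×2 permanents. -/
def zeonSq {n : ℕ} {R : Type*} [CommRing R] (A : Matrix (Fin n) (Fin n) R) :
    Matrix (Pairs n) (Pairs n) R :=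
  Matrix.of fun I J =>
    A I.1.1 J.1.1 * A I.1.2 J.1.2 + A I.1.1 J.1.2 * A I.1.2 J.1.1

/-- `Mat(X)`: symmetric matrix with zero diagonal built from a vector indexed by pairs. -/
def matOf {n : ℕ} {R : Type*} [CommRing R] (X : Pairs n → R) :
    Matrix (Fin n) (Fin n) R :=
  Matrix.of fun i j =>
    if h : i < j then X ⟨(i, j), h⟩ else if h' : j < i then X ⟨(j, i), h'⟩ else 0

/-!
Summing the row of `A^{∨2}` indexed by `i < j` over all pairs `k < l` gives
`∑_{k ≠ l} A_{ik} A_{jl}`, the `(i, j)` entry of `A (J - I) Aᵀ`. On the other side `X̂` and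
`A (J - I) Aᵀ` are symmetric and `X̂` has zero diagonal, so the trace counts each pair `i < j` twice.
-/

section SumOverPairs

variable {ι M : Type*} [Fintype ι] [LinearOrder ι] [AddCommMonoid M]

theorem Fintype.sum_subtype_lt_eq_sum_ite (g : ι × ι → M) :
    ∑ q : {p : ι × ι // p.1 < p.2}, g q = ∑ p, if p.1 < p.2 then g p else 0 := by
  rw [← Finset.sum_filter, Finset.sum_subtype (p := fun p : ι × ι => p.1 < p.2) _ (by simp)]

theorem Fintype.sum_subtype_lt_add_swap_add_sum_diag (f : ι × ι → M) :
    ∑ q : {p : ι × ι // p.1 < p.2}, (f q + f q.1.swap) + ∑ i, f (i, i) = ∑ p, f p := by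
  have swapped : ∑ p : ι × ι, (if p.1 < p.2 then f p.swap else 0)
      = ∑ p : ι × ι, if p.2 < p.1 then f p else 0 :=
    Fintype.sum_equiv (Equiv.prodComm ι ι) _ _ fun _ => rfl
  have diag : ∑ i, f (i, i) = ∑ p : ι × ι, if p.1 = p.2 then f p else 0 := by
    simp [Fintype.sum_prod_type]
  rw [Fintype.sum_subtype_lt_eq_sum_ite (fun p => f p + f p.swap), diag]
  simp only [ite_add_zero]
  rw [Finset.sum_add_distrib, swapped, ← Finset.sum_add_distrib, ← Finset.sum_add_distrib]
  refine Finset.sum_congr rfl fun p _ => ?_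
  rcases lt_trichotomy p.1 p.2 with h | h | h
  · simp [h, h.not_gt, h.ne]
  · simp [h]
  · simp [h, h.not_gt, h.ne']

end SumOverPairs

section Matrices

variable {m n R : Type*} [Fintype n] [CommRing R]

theorem Matrix.IsSymm.mul_mul_transpose {D : Matrix n n R} (hD : D.IsSymm) (A : Matrix m n R) :
    (A * D * Aᵀ).IsSymm := by
  rw [IsSymm, transpose_mul, transpose_mul, transpose_transpose, hD.eq, Matrix.mul_assoc]

theorem Matrix.mul_ones_sub_one_mul_transpose_apply [DecidableEq n] (A : Matrix m n R) (i j : m) :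
    (A * (of (fun _ _ => 1) - 1 : Matrix n n R) * Aᵀ) i j
      = ∑ k, ∑ l, A i k * A j l - ∑ k, A i k * A j k := by
  rw [Matrix.mul_sub, Matrix.sub_mul, Matrix.mul_one, sub_apply, Matrix.mul_apply, Matrix.mul_apply]
  simp only [Matrix.mul_apply, of_apply, mul_one, transpose_apply, Finset.sum_mul]
  rw [Finset.sum_comm]

end Matrices

section MatOf

variable {n : ℕ} {R : Type*} [CommRing R]

@[simp]
theorem matOf_apply_self (X : Pairs n → R) (i : Fin n) : matOf X i i = 0 := by
  simp [matOf]

@[simp]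
theorem matOf_apply_pair (X : Pairs n → R) (q : Pairs n) : matOf X q.1.1 q.1.2 = X q := by
  simp [matOf, q.2]

theorem isSymm_matOf (X : Pairs n → R) : (matOf X).IsSymm :=
  IsSymm.ext fun i j => by
    rcases lt_trichotomy i j with h | rfl | h
    · simp [matOf, h, h.not_gt]
    · rfl
    · simp [matOf, h, h.not_gt]

theorem trace_matOf_mul (X : Pairs n → R) {B : Matrix (Fin n) (Fin n) R} (hB : B.IsSymm) :
    trace (matOf X * B) = 2 * ∑ q, X q * B q.1.1 q.1.2 := by
  rw [trace, Finset.mul_sum]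
  simp only [diag, mul_apply]
  rw [← Fintype.sum_prod_type' (fun i j => matOf X i j * B j i),
    ← Fintype.sum_subtype_lt_add_swap_add_sum_diag]
  simp [(isSymm_matOf X).apply, hB.apply, two_mul]

theorem zeonSq_mulVec_one (A : Matrix (Fin n) (Fin n) R) (q : Pairs n) :
    (zeonSq A *ᵥ fun _ => 1) q
      = (A * (of (fun _ _ => 1) - 1 : Matrix (Fin n) (Fin n) R) * Aᵀ) q.1.1 q.1.2 := by
  rw [mul_ones_sub_one_mul_transpose_apply,
    ← Fintype.sum_prod_type' (fun k l => A q.1.1 k * A q.1.2 l),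
    eq_sub_iff_add_eq, ← Fintype.sum_subtype_lt_add_swap_add_sum_diag]
  simp [mulVec, dotProduct, zeonSq]

end MatOf

theorem stmt7 {n : ℕ} (A : Matrix (Fin n) (Fin n) ℚ) (X : Pairs n → ℚ) :
    (X ᵥ* zeonSq A) ⬝ᵥ (fun _ => 1) =
      (1 / 2) *
        Matrix.trace (matOf X * (A * (Matrix.of (fun _ _ => (1 : ℚ)) - 1) * Aᵀ)) := by
  have hJ : (of (fun _ _ => 1) - 1 : Matrix (Fin n) (Fin n) ℚ).IsSymm :=
    (IsSymm.ext fun _ _ => rfl).sub isSymm_one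
  rw [← dotProduct_mulVec, trace_matOf_mul X (hJ.mul_mul_transpose A)]
  simp only [dotProduct, zeonSq_mulVec_one]
  ring
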